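/- For r ≥ 3 and n = (r-1)m with m ≥ 3, the number of spanning K_r-cycles on a labeled vertex set of size n is n! / (2m · ((r-2)!)^m), where a spanning K_r-cycle is counted as a subgraph. -/

import Mathlib

/-- A `K_r`-cycle: consecutive copies share exactly one vertex and non-consecutive
copies are vertex disjoint. -/
def IsKrCycle {V : Type*} [DecidableEq V] (r m : ℕ) (H : ZMod m → Finset V) : Prop :=
  (∀ i, (H i).card = r) ∧
  (∀ i, (H i ∩ H (i + 1)).card = 1) ∧
  (∀ i j : ZMod m, i ≠ j → j ≠ i + 1 → i ≠ j + 1 → Disjoint (H i) (H j))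

/-- The union graph of the copies of `K_r` of a `K_r`-cycle. -/
def unionGraph {V : Type*} [DecidableEq V] {m : ℕ} (H : ZMod m → Finset V) : SimpleGraph V :=
  SimpleGraph.fromRel fun x y => ∃ i, x ∈ H i ∧ y ∈ H i

namespace KrAux

lemma zmod_natCast_ne_zero {m a : ℕ} (ha : 0 < a) (h : a < m) : (a : ZMod m) ≠ 0 := by
  haveI : NeZero m := ⟨by omega⟩
  intro hc
  have h2 := ZMod.val_cast_of_lt h
  rw [hc, ZMod.val_zero] at h2
  omega

lemma zmod_add_natCast_ne {m : ℕ} {a : ℕ} (h0 : 0 < a) (h : a < m) (i : ZMod m) :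
    i + (a : ZMod m) ≠ i := by
  intro hc
  exact zmod_natCast_ne_zero h0 h (by rwa [add_comm, add_eq_right] at hc)

section zfacts
variable {m : ℕ} (hm : 3 ≤ m)
include hm

lemma zmod_add_one_ne (i : ZMod m) : i + 1 ≠ i := by
  have := zmod_add_natCast_ne (a := 1) one_pos (by omega) i
  simpa using this

lemma zmod_add_two_ne (i : ZMod m) : i + 1 + 1 ≠ i := by
  have := zmod_add_natCast_ne (a := 2) (by omega) (by omega) i
  intro hc; apply this
  have h2 : i + ((2:ℕ) : ZMod m) = i + 1 + 1 := by push_cast; ring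
  rw [h2, hc]

end zfacts

section cycle
variable {V : Type*} [DecidableEq V] [Fintype V] {r m : ℕ} {H : ZMod m → Finset V}

omit [Fintype V]

lemma mem_consecutive (hH : IsKrCycle r m H) {x : V} {i j : ZMod m}
    (hi : x ∈ H i) (hj : x ∈ H j) (hij : i ≠ j) : j = i + 1 ∨ i = j + 1 := by
  by_contra hc
  push_neg at hc
  exact (Finset.disjoint_left.mp (hH.2.2 i j hij hc.1 hc.2) hi hj)

lemma inter_singleton (hH : IsKrCycle r m H) (i : ZMod m) :
    ∃ a, H i ∩ H (i + 1) = {a} := Finset.card_eq_one.mp (hH.2.1 i)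

lemma H_injective (hr : 3 ≤ r) (hH : IsKrCycle r m H) :
    Function.Injective H := by
  intro i j h
  by_contra hij
  obtain ⟨x, hx⟩ : (H i).Nonempty := by rw [← Finset.card_pos, hH.1 i]; omega
  rcases mem_consecutive hH hx (h ▸ hx) hij with h1 | h1
  · have := hH.2.1 i
    rw [← h1, ← h, Finset.inter_self, hH.1 i] at this
    omega
  · have := hH.2.1 j
    rw [← h1, h, Finset.inter_self, hH.1 j] at this
    omega

lemma unionGraph_adj (H : ZMod m → Finset V) (x y : V) :
    (unionGraph H).Adj x y ↔ x ≠ y ∧ ∃ i, x ∈ H i ∧ y ∈ H i := by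
  unfold unionGraph
  rw [SimpleGraph.fromRel_adj]
  constructor
  · rintro ⟨hne, ⟨i, h1, h2⟩ | ⟨i, h1, h2⟩⟩
    · exact ⟨hne, i, h1, h2⟩
    · exact ⟨hne, i, h2, h1⟩
  · rintro ⟨hne, i, h1, h2⟩
    exact ⟨hne, Or.inl ⟨i, h1, h2⟩⟩

lemma internal_nbhd (hH : IsKrCycle r m H) {v : V} {i : ZMod m}
    (hv : v ∈ H i) (hint : ∀ j, j ≠ i → v ∉ H j) (y : V) :
    (unionGraph H).Adj v y ↔ y ∈ H i ∧ y ≠ v := by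
  rw [unionGraph_adj]
  constructor
  · rintro ⟨hne, j, h1, h2⟩
    rcases eq_or_ne j i with h | h
    · exact ⟨h ▸ h2, fun hc => hne hc.symm⟩
    · exact absurd h1 (hint j h)
  · rintro ⟨hy, hne⟩
    exact ⟨fun hc => hne hc.symm, i, hv, hy⟩

lemma exists_internal (hr : 3 ≤ r) (hm : 3 ≤ m) (hH : IsKrCycle r m H) (i : ZMod m) :
    ∃ v ∈ H i, ∀ j, j ≠ i → v ∉ H j := by
  have hsub : (H i ∩ (H (i + 1) ∪ H (i - 1))).card ≤ 2 := by
    rw [Finset.inter_union_distrib_left]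
    refine le_trans (Finset.card_union_le _ _) ?_
    have e2 : (H i ∩ H (i - 1)).card = 1 := by
      rw [Finset.inter_comm]
      have := hH.2.1 (i - 1)
      rwa [sub_add_cancel] at this
    rw [hH.2.1 i, e2]
  obtain ⟨v, hv⟩ : (H i \ (H (i + 1) ∪ H (i - 1))).Nonempty := by
    rw [← Finset.card_pos]
    have := Finset.card_sdiff_add_card_inter (H i) (H (i + 1) ∪ H (i - 1))
    rw [hH.1 i] at this
    omega
  rw [Finset.mem_sdiff, Finset.mem_union] at hv
  push_neg at hv
  refine ⟨v, hv.1, fun j hj hvj => ?_⟩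
  rcases mem_consecutive hH hv.1 hvj hj.symm with h | h
  · exact hv.2.1 (h ▸ hvj)
  · apply hv.2.2
    rw [show i - 1 = j from by rw [h]; ring]
    exact hvj

end cycle

section cycle2
variable {V : Type*} [DecidableEq V] [Fintype V] {r m : ℕ} {H : ZMod m → Finset V}

lemma no_triple (hr : 3 ≤ r) (hm : 3 ≤ m) (hcard : Fintype.card V = (r - 1) * m)
    (hH : IsKrCycle r m H) {i : ZMod m} {x : V}
    (h0 : x ∈ H i) (h1 : x ∈ H (i + 1)) (h2 : x ∈ H (i + 1 + 1)) : False := by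
  by_cases hm3 : m = 3
  · subst hm3
    obtain ⟨b, hb⟩ := inter_singleton hH (i + 1)
    obtain ⟨d, hd⟩ := inter_singleton hH (i + 1 + 1)
    have h3 : i + 1 + 1 + 1 = i := by
      have h30 : (3 : ZMod 3) = 0 := by decide
      calc i + 1 + 1 + 1 = i + 3 := by ring
      _ = i := by rw [h30, add_zero]
    rw [h3] at hd
    have hxb : x = b := by
      have : x ∈ H (i + 1) ∩ H (i + 1 + 1) := Finset.mem_inter.mpr ⟨h1, h2⟩
      rw [hb] at this; exact Finset.mem_singleton.mp this
    have hxd : x = d := by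
      have : x ∈ H (i + 1 + 1) ∩ H i := Finset.mem_inter.mpr ⟨h2, h0⟩
      rw [hd] at this; exact Finset.mem_singleton.mp this
    have c1 : (H i ∪ H (i + 1)).card + 1 = 2 * r := by
      have := Finset.card_union_add_card_inter (H i) (H (i + 1))
      rw [hH.2.1 i, hH.1 i, hH.1 (i + 1)] at this
      omega
    have hint : (H i ∪ H (i + 1)) ∩ H (i + 1 + 1) = {x} := by
      rw [Finset.union_inter_distrib_right]
      have e1 : H i ∩ H (i + 1 + 1) = {x} := by
        rw [Finset.inter_comm, hd, hxd]
      have e2 : H (i + 1) ∩ H (i + 1 + 1) = {x} := by rw [hb, hxb]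
      rw [e1, e2, Finset.union_self]
    have c2 : (H i ∪ H (i + 1) ∪ H (i + 1 + 1)).card + 1
        = (H i ∪ H (i + 1)).card + r := by
      have := Finset.card_union_add_card_inter (H i ∪ H (i + 1)) (H (i + 1 + 1))
      rw [hint, hH.1 (i + 1 + 1), Finset.card_singleton] at this
      omega
    have c3 : (H i ∪ H (i + 1) ∪ H (i + 1 + 1)).card ≤ Fintype.card V :=
      Finset.card_le_univ _
    rw [hcard] at c3
    omega
  · have hm4 : 4 ≤ m := by omega
    have hd : Disjoint (H i) (H (i + 1 + 1)) := by
      apply hH.2.2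
      · exact fun h => zmod_add_two_ne hm i h.symm
      · exact fun h => zmod_add_one_ne hm (i + 1) h
      · intro h
        apply zmod_add_natCast_ne (m := m) (a := 3) (by omega) (by omega) i
        have h2 : i + ((3:ℕ) : ZMod m) = i + 1 + 1 + 1 := by push_cast; ring
        rw [h2, ← h]
    exact Finset.disjoint_left.mp hd h0 h2

lemma conn_distinct (hr : 3 ≤ r) (hm : 3 ≤ m) (hcard : Fintype.card V = (r - 1) * m)
    (hH : IsKrCycle r m H) {x : V} {i j : ZMod m}
    (hi : x ∈ H i ∩ H (i + 1)) (hj : x ∈ H j ∩ H (j + 1)) : i = j := by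
  rw [Finset.mem_inter] at hi hj
  by_contra hij
  rcases mem_consecutive hH hi.1 hj.1 hij with h | h
  · subst h; exact no_triple hr hm hcard hH hi.1 hi.2 hj.2
  · subst h; exact no_triple hr hm hcard hH hj.1 hj.2 hi.2

lemma family_eq (hr : 3 ≤ r) (hm : 3 ≤ m) (hcard : Fintype.card V = (r - 1) * m)
    {H H' : ZMod m → Finset V} (hH : IsKrCycle r m H) (hH' : IsKrCycle r m H')
    (hs : ∀ x, ∃ i, x ∈ H i)
    (hg : unionGraph H = unionGraph H') (i : ZMod m) : ∃ j, H' i = H j := by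
  obtain ⟨v, hv, hvint⟩ := exists_internal hr hm hH' i
  obtain ⟨j, hj⟩ := hs v
  refine ⟨j, ?_⟩
  have hnb : ∀ y, (unionGraph H).Adj v y ↔ y ∈ H' i ∧ y ≠ v := by
    intro y; rw [hg]; exact internal_nbhd hH' hv hvint y
  -- v is internal for H as well
  have hjint : ∀ k, k ≠ j → v ∉ H k := by
    intro k hk hvk
    have hsub : H j ∪ H k ⊆ H' i := by
      intro y hy
      rcases eq_or_ne y v with rfl | hyv
      · exact hv
      · rcases Finset.mem_union.mp hy with h | h
        · exact ((hnb y).mp ((unionGraph_adj H v y).mpr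
            ⟨fun hc => hyv hc.symm, j, hj, h⟩)).1
        · exact ((hnb y).mp ((unionGraph_adj H v y).mpr
            ⟨fun hc => hyv hc.symm, k, hvk, h⟩)).1
    have hcard2 : (H j ∪ H k).card ≤ r := by
      rw [← hH'.1 i]; exact Finset.card_le_card hsub
    have hint1 : (H j ∩ H k).card ≤ 1 := by
      rcases mem_consecutive hH hj hvk hk.symm with h | h
      · rw [h, hH.2.1 j]
      · rw [Finset.inter_comm, h, hH.2.1 k]
    have := Finset.card_union_add_card_inter (H j) (H k)
    rw [hH.1 j, hH.1 k] at this
    omega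
  ext y
  rcases eq_or_ne y v with rfl | hyv
  · simp [hv, hj]
  · constructor
    · intro hy
      have := (hnb y).mpr ⟨hy, hyv⟩
      exact ((internal_nbhd hH hj hjint y).mp this).1
    · intro hy
      have := (internal_nbhd hH hj hjint y).mpr ⟨hy, hyv⟩
      exact ((hnb y).mp this).1

lemma exists_rot (hr : 3 ≤ r) (hm : 3 ≤ m) (hcard : Fintype.card V = (r - 1) * m)
    {H H' : ZMod m → Finset V} (hH : IsKrCycle r m H) (hH' : IsKrCycle r m H')
    (hs : ∀ x, ∃ i, x ∈ H i) (hg : unionGraph H = unionGraph H') :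
    ∃ a ε : ZMod m, (ε = 1 ∨ ε = -1) ∧ ∀ i, H' i = H (a + ε * i) := by
  haveI : NeZero m := ⟨by omega⟩
  choose π hπ using family_eq hr hm hcard hH hH' hs hg
  have hinj : Function.Injective π := by
    intro i j h
    have h2 : H' i = H' j := by rw [hπ i, hπ j, h]
    by_contra hij
    exact hij (H_injective hr hH' h2)
  have hstep : ∀ i, π (i + 1) = π i + 1 ∨ π (i + 1) = π i - 1 := by
    intro i
    have hcard1 : (H (π i) ∩ H (π (i + 1))).card = 1 := by
      rw [← hπ i, ← hπ (i + 1)]; exact hH'.2.1 i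
    have hne : π i ≠ π (i + 1) := by
      intro h
      rw [← h, Finset.inter_self, hH.1] at hcard1; omega
    obtain ⟨x, hx⟩ : (H (π i) ∩ H (π (i + 1))).Nonempty := by
      rw [← Finset.card_pos, hcard1]; omega
    rw [Finset.mem_inter] at hx
    rcases mem_consecutive hH hx.1 hx.2 hne with h | h
    · exact Or.inl h
    · right; rw [h]; ring
  set d := π 1 - π 0 with hd
  have hclaim : ∀ i : ZMod m, π (i + 1) - π i = d → π (i + 1 + 1) - π (i + 1) = d := by
    intro i hi
    rcases hstep i with h | h <;> rcases hstep (i + 1) with h2 | h2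
    · rw [h2]; linear_combination hi - h
    · exfalso
      have hc : π (i + 1 + 1) = π i := by rw [h2, h]; ring
      exact zmod_add_two_ne hm i (hinj hc)
    · exfalso
      have hc : π (i + 1 + 1) = π i := by rw [h2, h]; ring
      exact zmod_add_two_ne hm i (hinj hc)
    · rw [h2]; linear_combination hi - h
  have hdiffnat : ∀ k : ℕ, π ((k : ZMod m) + 1) - π (k : ZMod m) = d := by
    intro k
    induction k with
    | zero => simp [hd]
    | succ k ih =>
      have : ((k + 1 : ℕ) : ZMod m) = (k : ZMod m) + 1 := by push_cast; ring
      rw [this]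
      exact hclaim _ ih
  have hdiff : ∀ i : ZMod m, π (i + 1) = π i + d := by
    intro i
    obtain ⟨k, rfl⟩ := ZMod.natCast_zmod_surjective i
    have := hdiffnat k
    linear_combination this
  have hval : ∀ i : ZMod m, π i = π 0 + d * i := by
    intro i
    obtain ⟨k, rfl⟩ := ZMod.natCast_zmod_surjective i
    induction k with
    | zero => simp
    | succ k ih =>
      have hc : ((k + 1 : ℕ) : ZMod m) = (k : ZMod m) + 1 := by push_cast; ring
      rw [hc, hdiff, ih]
      ring
  have hde : d = 1 ∨ d = -1 := by
    rcases hstep 0 with h | h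
    · left; rw [hd, zero_add] at *; rw [h]; ring
    · right; rw [hd, zero_add] at *; rw [h]; ring
  exact ⟨π 0, d, hde, fun i => by rw [hπ i, hval i]⟩

lemma rot_isKrCycle (hm : 3 ≤ m) (hH : IsKrCycle r m H) (a ε : ZMod m)
    (hε : ε = 1 ∨ ε = -1) : IsKrCycle r m (fun i => H (a + ε * i)) := by
  rcases hε with rfl | rfl
  · refine ⟨fun i => hH.1 _, fun i => ?_, fun i j h1 h2 h3 => ?_⟩
    · simp only [one_mul]
      rw [show a + (i + 1) = a + i + 1 from by ring]
      exact hH.2.1 (a + i)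
    · simp only [one_mul]
      refine hH.2.2 _ _ ?_ ?_ ?_ <;> intro hc
      · exact h1 (by linear_combination hc)
      · exact h2 (by linear_combination hc)
      · exact h3 (by linear_combination hc)
  · refine ⟨fun i => hH.1 _, fun i => ?_, fun i j h1 h2 h3 => ?_⟩
    · simp only
      rw [Finset.inter_comm, show a + -1 * i = a + -1 * (i + 1) + 1 from by ring]
      exact hH.2.1 (a + -1 * (i + 1))
    · simp only
      refine hH.2.2 _ _ ?_ ?_ ?_ <;> intro hc
      · exact h1 (by linear_combination -hc)
      · exact h3 (by linear_combination hc)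
      · exact h2 (by linear_combination hc)

lemma rot_spanning (hH : IsKrCycle r m H) (hs : ∀ x, ∃ i, x ∈ H i) (a ε : ZMod m)
    (hε : ε = 1 ∨ ε = -1) : ∀ x, ∃ i, x ∈ H (a + ε * i) := by
  intro x
  obtain ⟨j, hj⟩ := hs x
  refine ⟨ε * (j - a), ?_⟩
  have h : a + ε * (ε * (j - a)) = j := by rcases hε with rfl | rfl <;> ring
  rw [h]; exact hj

lemma rot_unionGraph (a ε : ZMod m) (hε : ε = 1 ∨ ε = -1) :
    unionGraph (fun i => H (a + ε * i)) = unionGraph H := by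
  have hsurj : ∀ j : ZMod m, ∃ i, a + ε * i = j := by
    intro j
    refine ⟨ε * (j - a), ?_⟩
    rcases hε with rfl | rfl <;> ring
  ext x y
  rw [unionGraph_adj, unionGraph_adj]
  constructor
  · rintro ⟨hne, i, h1, h2⟩
    exact ⟨hne, a + ε * i, h1, h2⟩
  · rintro ⟨hne, j, h1, h2⟩
    obtain ⟨i, hi⟩ := hsurj j
    exact ⟨hne, i, by rw [hi]; exact h1, by rw [hi]; exact h2⟩

end cycle2

lemma count_fibers {α β : Type*} [Fintype α] (f : α → β) (A : Set α) (k : ℕ)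
    (h : ∀ b ∈ f '' A, {a ∈ A | f a = b}.ncard = k) : (f '' A).ncard * k = A.ncard := by
  classical
  have hA : A.Finite := Set.toFinite A
  have hB : (f '' A).Finite := Set.toFinite _
  set A' : Finset α := hA.toFinset with hA'
  set B' : Finset β := hB.toFinset with hB'
  have hmap : ∀ a ∈ A', f a ∈ B' := by
    intro a ha
    rw [hA', Set.Finite.mem_toFinset] at ha
    rw [hB', Set.Finite.mem_toFinset]
    exact ⟨a, ha, rfl⟩
  have hsum := Finset.card_eq_sum_card_fiberwise hmap
  have hfib : ∀ b ∈ B', (A'.filter (fun a => f a = b)).card = k := by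
    intro b hb
    have hbb : b ∈ f '' A := by rwa [hB', Set.Finite.mem_toFinset] at hb
    rw [← h b hbb]
    have heq : {a ∈ A | f a = b} = ↑(A'.filter fun a => f a = b) := by
      ext a
      simp only [Set.mem_setOf_eq, Finset.coe_filter, hA', Set.Finite.mem_toFinset]
    rw [heq, Set.ncard_coe_finset]
  rw [Finset.sum_congr rfl hfib, Finset.sum_const, smul_eq_mul] at hsum
  have h1 : A.ncard = A'.card := by
    rw [← Set.ncard_coe_finset A', hA', Set.Finite.coe_toFinset]
  have h2 : (f '' A).ncard = B'.card := by
    rw [← Set.ncard_coe_finset B', hB', Set.Finite.coe_toFinset]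
  rw [h1, h2, hsum]

section hsub
variable {V : Type*} [DecidableEq V] [Fintype V] {m k : ℕ}

def Hsub (e : (ZMod m × Fin (k + 2)) ≃ V) (i : ZMod m) : Finset V :=
  insert (e (i + 1, 0)) (Finset.univ.image fun j : Fin (k + 2) => e (i, j))

omit [Fintype V] in
lemma mem_Hsub (e : (ZMod m × Fin (k + 2)) ≃ V) (i : ZMod m) (p : ZMod m × Fin (k + 2)) :
    e p ∈ Hsub e i ↔ p = (i + 1, 0) ∨ p.1 = i := by
  obtain ⟨i', j'⟩ := p
  simp only [Hsub, Finset.mem_insert, Finset.mem_image, Finset.mem_univ, true_and]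
  constructor
  · rintro (h | ⟨j, hj⟩)
    · exact Or.inl (e.injective h)
    · right
      have := e.injective hj
      rw [Prod.mk.injEq] at this
      exact this.1.symm
  · rintro (h | h)
    · rw [h]
      exact Or.inl rfl
    · right
      refine ⟨j', ?_⟩
      rw [h]

omit [Fintype V] in
lemma card_Hsub (hm : 3 ≤ m) (e : (ZMod m × Fin (k + 2)) ≃ V) (i : ZMod m) :
    (Hsub e i).card = k + 3 := by
  have himg : (Finset.univ.image fun j : Fin (k + 2) => e (i, j)).card = k + 2 := by
    rw [Finset.card_image_of_injective _ (fun j j' h => by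
      have := e.injective h
      rw [Prod.mk.injEq] at this
      exact this.2)]
    simp
  rw [Hsub, Finset.card_insert_of_notMem, himg]
  intro hc
  rw [Finset.mem_image] at hc
  obtain ⟨j, -, hj⟩ := hc
  have h2 := e.injective hj
  rw [Prod.mk.injEq] at h2
  exact zmod_add_one_ne hm i h2.1.symm

omit [Fintype V] in
lemma Hsub_inter (hm : 3 ≤ m) (e : (ZMod m × Fin (k + 2)) ≃ V) (i : ZMod m) :
    Hsub e i ∩ Hsub e (i + 1) = {e (i + 1, 0)} := by
  ext x
  obtain ⟨p, rfl⟩ := e.surjective x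
  rw [Finset.mem_inter, mem_Hsub, mem_Hsub, Finset.mem_singleton]
  constructor
  · rintro ⟨h1 | h1, h2 | h2⟩
    · exfalso
      rw [h1, Prod.mk.injEq] at h2
      exact zmod_add_one_ne hm (i + 1) h2.1.symm
    · rw [h1]
    · exfalso
      have hc := h1.symm.trans (congrArg Prod.fst h2)
      exact zmod_add_two_ne hm i hc.symm
    · exfalso
      rw [h1] at h2
      exact zmod_add_one_ne hm i h2.symm
  · intro h
    have hp := e.injective h
    rw [hp]
    exact ⟨Or.inl rfl, Or.inr rfl⟩

omit [Fintype V] in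
lemma isKrCycle_Hsub (hm : 3 ≤ m) (e : (ZMod m × Fin (k + 2)) ≃ V) :
    IsKrCycle (k + 3) m (Hsub e) := by
  refine ⟨card_Hsub hm e, fun i => by rw [Hsub_inter hm e i, Finset.card_singleton],
    fun i j h1 h2 h3 => ?_⟩
  rw [Finset.disjoint_left]
  intro x hx hx'
  obtain ⟨p, rfl⟩ := e.surjective x
  rw [mem_Hsub] at hx hx'
  rcases hx with h | h <;> rcases hx' with h' | h'
  · rw [h, Prod.mk.injEq] at h'
    exact h1 (by linear_combination h'.1)
  · rw [h] at h'
    exact h2 h'.symm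
  · have hc : j + 1 = i := by rw [← h, h']
    exact h3 hc.symm
  · rw [h] at h'
    exact h1 h'

omit [Fintype V] in
lemma Hsub_spanning (e : (ZMod m × Fin (k + 2)) ≃ V) (x : V) : ∃ i, x ∈ Hsub e i := by
  obtain ⟨p, rfl⟩ := e.surjective x
  exact ⟨p.1, by rw [mem_Hsub]; exact Or.inr rfl⟩

lemma exists_Hsub (hm : 3 ≤ m) (hcard : Fintype.card V = (k + 2) * m)
    {H : ZMod m → Finset V} (hH : IsKrCycle (k + 3) m H) (hs : ∀ x, ∃ i, x ∈ H i) :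
    ∃ e : (ZMod m × Fin (k + 2)) ≃ V, Hsub e = H := by
  haveI : NeZero m := ⟨by omega⟩
  choose c hc using inter_singleton hH
  have hcmem : ∀ i, c i ∈ H i ∧ c i ∈ H (i + 1) := by
    intro i
    have h2 : c i ∈ H i ∩ H (i + 1) := by rw [hc i]; exact Finset.mem_singleton_self _
    exact Finset.mem_inter.mp h2
  have hrm : Fintype.card V = (k + 3 - 1) * m := by rw [hcard]; rfl
  have hCD : ∀ i j, c i = c j → i = j := by
    intro i j h
    exact conn_distinct (by omega) hm hrm hH (x := c i)
      (by rw [hc i]; exact Finset.mem_singleton_self _)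
      (by rw [h, hc j]; exact Finset.mem_singleton_self _)
  set I : ZMod m → Finset V := fun i => H i \ {c (i - 1), c i} with hI
  have hcimem : ∀ i, c (i - 1) ∈ H i := by
    intro i
    have h2 := (hcmem (i - 1)).2
    rwa [sub_add_cancel] at h2
  have hcne : ∀ i, c (i - 1) ≠ c i := by
    intro i h
    have h2 := hCD _ _ h
    have h3 : i + 1 = i := by linear_combination -h2
    exact zmod_add_one_ne hm i h3
  have hIcard : ∀ i, (I i).card = k + 1 := by
    intro i
    have hsub2 : {c (i - 1), c i} ⊆ H i := by
      intro x hx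
      rcases Finset.mem_insert.mp hx with rfl | hx
      · exact hcimem i
      · rw [Finset.mem_singleton.mp hx]; exact (hcmem i).1
    rw [hI]
    simp only
    rw [Finset.card_sdiff_of_subset hsub2, hH.1 i,
      Finset.card_insert_of_notMem (by simp [hcne i]), Finset.card_singleton]
    omega
  have hImem : ∀ i x, x ∈ I i ↔ x ∈ H i ∧ x ≠ c (i - 1) ∧ x ≠ c i := by
    intro i x
    rw [hI]
    simp only [Finset.mem_sdiff, Finset.mem_insert, Finset.mem_singleton]
    tauto
  -- (A) connectors are not internal
  have hA : ∀ t i, c t ∉ I i := by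
    intro t i hx
    rw [hImem] at hx
    obtain ⟨hxi, hne1, hne2⟩ := hx
    rcases eq_or_ne t i with rfl | hti
    · exact hne2 rfl
    rcases mem_consecutive hH hxi (hcmem t).1 hti.symm with h | h
    · apply hne2
      have h2 : c t ∈ H i ∩ H (i + 1) := Finset.mem_inter.mpr ⟨hxi, h ▸ (hcmem t).1⟩
      rw [hc i] at h2
      exact Finset.mem_singleton.mp h2
    · apply hne1
      have h2 : t = i - 1 := by linear_combination -h
      rw [h2]
  -- (B) internal sets are disjoint
  have hB : ∀ i i' x, x ∈ I i → x ∈ I i' → i = i' := by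
    intro i i' x hx hx'
    by_contra hii
    rw [hImem] at hx hx'
    rcases mem_consecutive hH hx.1 hx'.1 hii with h | h
    · apply hx'.2.1
      have h2 : x ∈ H i ∩ H (i + 1) := Finset.mem_inter.mpr ⟨hx.1, h ▸ hx'.1⟩
      rw [hc i] at h2
      have h3 := Finset.mem_singleton.mp h2
      have h4 : i = i' - 1 := by linear_combination -h
      rw [h3, h4]
    · apply hx.2.1
      have h2 : x ∈ H i' ∩ H (i' + 1) := Finset.mem_inter.mpr ⟨hx'.1, h ▸ hx.1⟩
      rw [hc i'] at h2
      have h3 : i' = i - 1 := by linear_combination -h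
      rw [← h3]
      exact Finset.mem_singleton.mp h2
  -- enumerations of internal sets
  set g : (i : ZMod m) → Fin (k + 1) → V :=
    fun i j => (((I i).equivFinOfCardEq (hIcard i)).symm j : V) with hg
  have hgmem : ∀ i j, g i j ∈ I i := fun i j => (((I i).equivFinOfCardEq (hIcard i)).symm j).2
  have hginj : ∀ i, Function.Injective (g i) := by
    intro i j j' h
    have h2 : ((I i).equivFinOfCardEq (hIcard i)).symm j
        = ((I i).equivFinOfCardEq (hIcard i)).symm j' := Subtype.ext h
    exact ((I i).equivFinOfCardEq (hIcard i)).symm.injective h2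
  have hgsurj : ∀ i, ∀ x ∈ I i, ∃ j, g i j = x := by
    intro i x hx
    refine ⟨(I i).equivFinOfCardEq (hIcard i) ⟨x, hx⟩, ?_⟩
    rw [hg]
    simp
  -- the map
  set f : ZMod m × Fin (k + 2) → V :=
    fun p => Fin.cases (c (p.1 - 1)) (fun j' => g p.1 j') p.2 with hf
  have hf0 : ∀ i, f (i, 0) = c (i - 1) := fun i => rfl
  have hfs : ∀ i (j : Fin (k + 1)), f (i, j.succ) = g i j := fun i j => rfl
  have hfinj : Function.Injective f := by
    rintro ⟨i, j⟩ ⟨i', j'⟩ h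
    rcases Fin.eq_zero_or_eq_succ j with rfl | ⟨j1, rfl⟩ <;>
      rcases Fin.eq_zero_or_eq_succ j' with rfl | ⟨j1', rfl⟩
    · rw [hf0, hf0] at h
      have h2 := hCD _ _ h
      have h3 : i = i' := by linear_combination h2
      rw [h3]
    · rw [hf0, hfs] at h
      exact absurd (h ▸ hgmem i' j1') (hA (i - 1) i')
    · rw [hfs, hf0] at h
      exact absurd (h ▸ hgmem i j1) (hA (i' - 1) i)
    · rw [hfs, hfs] at h
      have h2 : i = i' := hB i i' _ (hgmem i j1) (h.symm ▸ hgmem i' j1')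
      subst h2
      rw [hginj i h]
  have hbij : Function.Bijective f := by
    rw [Fintype.bijective_iff_injective_and_card]
    refine ⟨hfinj, ?_⟩
    rw [Fintype.card_prod, ZMod.card, Fintype.card_fin, hcard, mul_comm]
  refine ⟨Equiv.ofBijective f hbij, ?_⟩
  funext i
  ext x
  have hesimp : ∀ p, (Equiv.ofBijective f hbij) p = f p := fun p => rfl
  constructor
  · intro hx
    rw [Hsub, Finset.mem_insert] at hx
    rcases hx with h | hx
    · rw [hesimp, hf0] at h
      rw [h]
      have h2 : i + 1 - 1 = i := by ring
      rw [h2]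
      exact (hcmem i).1
    · rw [Finset.mem_image] at hx
      obtain ⟨j, -, hj⟩ := hx
      rw [hesimp] at hj
      rcases Fin.eq_zero_or_eq_succ j with rfl | ⟨j1, rfl⟩
      · rw [hf0] at hj
        rw [← hj]
        exact hcimem i
      · rw [hfs] at hj
        rw [← hj]
        exact Finset.sdiff_subset (hgmem i j1)
  · intro hx
    rw [Hsub, Finset.mem_insert]
    by_cases h1 : x = c i
    · left
      rw [hesimp, hf0, h1]
      have h2 : i + 1 - 1 = i := by ring
      rw [h2]
    by_cases h2 : x = c (i - 1)
    · right
      rw [Finset.mem_image]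
      exact ⟨0, Finset.mem_univ _, by rw [hesimp, hf0, h2]⟩
    · right
      rw [Finset.mem_image]
      have hxI : x ∈ I i := (hImem i x).mpr ⟨hx, h2, h1⟩
      obtain ⟨j, hj⟩ := hgsurj i x hxI
      exact ⟨j.succ, Finset.mem_univ _, by rw [hesimp, hfs, hj]⟩

def liftPerm (σ : Equiv.Perm (Fin (k + 1))) : Equiv.Perm (Fin (k + 2)) :=
  Equiv.Perm.decomposeFin.symm (0, σ)

lemma liftPerm_zero (σ : Equiv.Perm (Fin (k + 1))) : liftPerm σ 0 = 0 := by
  simp [liftPerm]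

lemma liftPerm_succ (σ : Equiv.Perm (Fin (k + 1))) (j : Fin (k + 1)) :
    liftPerm σ j.succ = (σ j).succ := by
  simp [liftPerm, Equiv.Perm.decomposeFin_symm_apply_succ]

def gmap (ρ : ZMod m → Equiv.Perm (Fin (k + 1))) : Equiv.Perm (ZMod m × Fin (k + 2)) :=
  Equiv.prodShear (Equiv.refl _) (fun i => liftPerm (ρ i))

lemma gmap_apply (ρ : ZMod m → Equiv.Perm (Fin (k + 1))) (i : ZMod m) (j : Fin (k + 2)) :
    gmap ρ (i, j) = (i, liftPerm (ρ i) j) := rfl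

omit [Fintype V] in
lemma Hsub_gmap (e : (ZMod m × Fin (k + 2)) ≃ V) (ρ : ZMod m → Equiv.Perm (Fin (k + 1))) :
    Hsub ((gmap ρ).trans e) = Hsub e := by
  funext i
  unfold Hsub
  have h0 : (gmap ρ).trans e (i + 1, 0) = e (i + 1, 0) := by
    rw [Equiv.trans_apply, gmap_apply, liftPerm_zero]
  rw [h0]
  congr 1
  ext x
  simp only [Finset.mem_image, Finset.mem_univ, true_and]
  constructor
  · rintro ⟨j, rfl⟩
    exact ⟨liftPerm (ρ i) j, rfl⟩
  · rintro ⟨j, rfl⟩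
    obtain ⟨j0, hj0⟩ := (liftPerm (ρ i)).surjective j
    refine ⟨j0, ?_⟩
    rw [Equiv.trans_apply, gmap_apply, hj0]

omit [Fintype V] in
lemma gmap_injective (e : (ZMod m × Fin (k + 2)) ≃ V) :
    Function.Injective (fun ρ : ZMod m → Equiv.Perm (Fin (k + 1)) => (gmap ρ).trans e) := by
  intro ρ ρ' h
  funext i
  apply Equiv.ext
  intro j
  have h2 := congrArg (fun q : (ZMod m × Fin (k + 2)) ≃ V => q (i, j.succ)) h
  simp only [Equiv.trans_apply, gmap_apply, liftPerm_succ] at h2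
  have h3 := e.injective h2
  rw [Prod.mk.injEq] at h3
  exact Fin.succ_injective _ h3.2

omit [Fintype V] in
lemma fiber_sub (hm : 3 ≤ m) (e e' : (ZMod m × Fin (k + 2)) ≃ V)
    (h : Hsub e' = Hsub e) : ∃ ρ, e' = (gmap ρ).trans e := by
  have ha : ∀ i, e' (i, 0) = e (i, 0) := by
    intro i
    have h1 : Hsub e' (i - 1) ∩ Hsub e' (i - 1 + 1) = {e' (i - 1 + 1, 0)} :=
      Hsub_inter hm e' (i - 1)
    have h2 : Hsub e (i - 1) ∩ Hsub e (i - 1 + 1) = {e (i - 1 + 1, 0)} :=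
      Hsub_inter hm e (i - 1)
    rw [h] at h1
    rw [h1] at h2
    have h3 := Finset.singleton_injective h2
    rwa [sub_add_cancel] at h3
  have hb : ∀ (i : ZMod m) (j' : Fin (k + 1)), ∃ t : Fin (k + 1), e' (i, j'.succ) = e (i, t.succ) := by
    intro i j'
    have hx : e' (i, j'.succ) ∈ Hsub e i := by
      rw [← h, mem_Hsub]
      exact Or.inr rfl
    obtain ⟨p, hp⟩ : ∃ p, e p = e' (i, j'.succ) := ⟨e.symm _, e.apply_symm_apply _⟩
    rw [← hp, mem_Hsub] at hx
    rcases hx with h1 | h1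
    · exfalso
      rw [h1, ← ha (i + 1)] at hp
      have := e'.injective hp
      rw [Prod.mk.injEq] at this
      exact Fin.succ_ne_zero j' this.2.symm
    · rcases Fin.eq_zero_or_eq_succ p.2 with h2 | ⟨t, h2⟩
      · exfalso
        have hp2 : p = (i, 0) := Prod.ext h1 h2
        rw [hp2, ← ha i] at hp
        have h3 := e'.injective hp
        rw [Prod.mk.injEq] at h3
        exact Fin.succ_ne_zero j' h3.2.symm
      · refine ⟨t, ?_⟩
        have hp2 : p = (i, t.succ) := Prod.ext h1 h2
        rw [hp2] at hp
        exact hp.symm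
  choose τ hτ using hb
  have hτinj : ∀ i, Function.Injective (τ i) := by
    intro i j j' hjj
    have h1 : e' (i, j.succ) = e' (i, j'.succ) := by
      rw [hτ i j, hτ i j', hjj]
    have h2 := e'.injective h1
    rw [Prod.mk.injEq] at h2
    exact Fin.succ_injective _ h2.2
  have hτbij : ∀ i, Function.Bijective (τ i) :=
    fun i => Finite.injective_iff_bijective.mp (hτinj i)
  refine ⟨fun i => Equiv.ofBijective (τ i) (hτbij i), ?_⟩
  apply Equiv.ext
  rintro ⟨i, j⟩
  rcases Fin.eq_zero_or_eq_succ j with rfl | ⟨j1, rfl⟩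
  · rw [Equiv.trans_apply, gmap_apply, liftPerm_zero, ha]
  · rw [Equiv.trans_apply, gmap_apply, liftPerm_succ]
    exact hτ i j1

lemma Hsub_fiber_ncard (hm : 3 ≤ m) (e : (ZMod m × Fin (k + 2)) ≃ V) :
    {e' : (ZMod m × Fin (k + 2)) ≃ V | e' ∈ (Set.univ : Set _) ∧ Hsub e' = Hsub e}.ncard
      = (k + 1).factorial ^ m := by
  haveI : NeZero m := ⟨by omega⟩
  have hset : {e' : (ZMod m × Fin (k + 2)) ≃ V | e' ∈ (Set.univ : Set _) ∧ Hsub e' = Hsub e}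
      = (fun ρ : ZMod m → Equiv.Perm (Fin (k + 1)) => (gmap ρ).trans e) '' Set.univ := by
    ext e'
    simp only [Set.mem_setOf_eq, Set.mem_univ, true_and, Set.image_univ, Set.mem_range]
    constructor
    · intro he
      obtain ⟨ρ, hρ⟩ := fiber_sub hm e e' he
      exact ⟨ρ, hρ.symm⟩
    · rintro ⟨ρ, rfl⟩
      exact Hsub_gmap e ρ
  rw [hset, Set.ncard_image_of_injective _ (gmap_injective e), Set.ncard_univ,
    Nat.card_eq_fintype_card, Fintype.card_fun, Fintype.card_perm, Fintype.card_fin, ZMod.card]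

end hsub

end KrAux

section
open KrAux

/-- For `r ≥ 3` and `n = (r-1)m` with `m ≥ 3`, the number of spanning `K_r`-cycles
(counted as subgraphs) on a labeled vertex set of size `n` is `n! / (2m ((r-2)!)^m)`. -/
theorem count_spanning_krCycles (r m n : ℕ) (hr : 3 ≤ r) (hm : 3 ≤ m) (hn : n = (r - 1) * m) :
    {G : SimpleGraph (Fin n) | ∃ H : ZMod m → Finset (Fin n),
        IsKrCycle r m H ∧ (∀ x, ∃ i, x ∈ H i) ∧ G = unionGraph H}.ncard
      * (2 * m * ((r - 2).factorial) ^ m) = n.factorial := by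
  classical
  obtain ⟨k, rfl⟩ : ∃ k, r = k + 3 := ⟨r - 3, by omega⟩
  subst hn
  haveI : NeZero m := ⟨by omega⟩
  set V := Fin ((k + 3 - 1) * m) with hV
  have hcard : Fintype.card V = (k + 3 - 1) * m := Fintype.card_fin _
  have hcard2 : Fintype.card V = (k + 2) * m := Fintype.card_fin _
  set F : Set (ZMod m → Finset V) := {H | IsKrCycle (k + 3) m H ∧ ∀ x, ∃ i, x ∈ H i} with hF
  -- Stage 2 : counting bijections
  have stage2 : F.ncard * ((k + 1).factorial ^ m) = ((k + 3 - 1) * m).factorial := by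
    have hfibers : ∀ b ∈ (fun e : (ZMod m × Fin (k + 2)) ≃ V => Hsub e) '' Set.univ,
        {a ∈ (Set.univ : Set ((ZMod m × Fin (k + 2)) ≃ V)) | Hsub a = b}.ncard
          = (k + 1).factorial ^ m := by
      rintro b ⟨e, -, rfl⟩
      exact Hsub_fiber_ncard hm e
    have key := count_fibers (fun e : (ZMod m × Fin (k + 2)) ≃ V => Hsub e) Set.univ
      ((k + 1).factorial ^ m) hfibers
    have himg : (fun e : (ZMod m × Fin (k + 2)) ≃ V => Hsub e) '' Set.univ = F := by
      ext H
      simp only [Set.image_univ, Set.mem_range, hF, Set.mem_setOf_eq]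
      constructor
      · rintro ⟨e, rfl⟩
        exact ⟨isKrCycle_Hsub hm e, Hsub_spanning e⟩
      · rintro ⟨h1, h2⟩
        exact exists_Hsub hm hcard2 h1 h2
    rw [himg] at key
    rw [key, Set.ncard_univ, Nat.card_eq_fintype_card]
    have hce : Fintype.card ((ZMod m × Fin (k + 2)) ≃ V)
        = (Fintype.card (ZMod m × Fin (k + 2))).factorial :=
      Fintype.card_equiv (Fintype.equivOfCardEq (by
        rw [Fintype.card_prod, ZMod.card, Fintype.card_fin, hcard2, mul_comm]))
    rw [hce, Fintype.card_prod, ZMod.card, Fintype.card_fin]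
    congr 1
    have : k + 3 - 1 = k + 2 := rfl
    rw [this, mul_comm]
  -- Stage 1 : counting families per graph
  have stage1 : {G : SimpleGraph V | ∃ H : ZMod m → Finset V,
        IsKrCycle (k + 3) m H ∧ (∀ x, ∃ i, x ∈ H i) ∧ G = unionGraph H}.ncard
      * (2 * m) = F.ncard := by
    have himg : (fun H : ZMod m → Finset V => unionGraph H) '' F
        = {G : SimpleGraph V | ∃ H : ZMod m → Finset V,
            IsKrCycle (k + 3) m H ∧ (∀ x, ∃ i, x ∈ H i) ∧ G = unionGraph H} := by
      ext G
      simp only [Set.mem_image, hF, Set.mem_setOf_eq]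
      constructor
      · rintro ⟨H, ⟨h1, h2⟩, rfl⟩
        exact ⟨H, h1, h2, rfl⟩
      · rintro ⟨H, h1, h2, rfl⟩
        exact ⟨H, ⟨h1, h2⟩, rfl⟩
    rw [← himg]
    have hfibers : ∀ G ∈ (fun H : ZMod m → Finset V => unionGraph H) '' F,
        {H ∈ F | unionGraph H = G}.ncard = 2 * m := by
      rintro G ⟨H₀, hH₀, rfl⟩
      rw [hF] at hH₀
      have hinj : Function.Injective (fun p : ZMod m × Bool =>
          fun i : ZMod m => H₀ (p.1 + (if p.2 then (1 : ZMod m) else -1) * i)) := by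
        rintro ⟨a, b⟩ ⟨a', b'⟩ hfun
        simp only at hfun
        have h0 := congrFun hfun 0
        simp only [mul_zero, add_zero] at h0
        have ha := H_injective (by omega) hH₀.1 h0
        have h1 := congrFun hfun 1
        simp only [mul_one] at h1
        have hb := H_injective (by omega) hH₀.1 h1
        rw [ha] at hb
        have hb2 : b = b' := by
          cases b <;> cases b'
          · rfl
          · exfalso
            norm_num at hb
            have h4 : (0 : ZMod m) + 1 + 1 = 0 := by linear_combination -hb
            exact zmod_add_two_ne hm 0 h4
          · exfalso
            norm_num at hb
            have h4 : (0 : ZMod m) + 1 + 1 = 0 := by linear_combination hb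
            exact zmod_add_two_ne hm 0 h4
          · rfl
        rw [ha, hb2]
      have hset : {H ∈ F | unionGraph H = unionGraph H₀}
          = (fun p : ZMod m × Bool =>
              fun i : ZMod m => H₀ (p.1 + (if p.2 then (1 : ZMod m) else -1) * i))
            '' Set.univ := by
        ext H
        simp only [Set.mem_setOf_eq, Set.image_univ, Set.mem_range, hF]
        constructor
        · rintro ⟨⟨h1, h2⟩, h3⟩
          obtain ⟨a, ε, hε, hval⟩ := exists_rot (by omega) hm hcard hH₀.1 h1 hH₀.2 h3.symm
          rcases hε with rfl | rfl
          · refine ⟨(a, true), ?_⟩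
            funext i
            simp only [if_true]
            exact (hval i).symm
          · refine ⟨(a, false), ?_⟩
            funext i
            simp only [if_false]
            exact (hval i).symm
        · rintro ⟨⟨a, b⟩, rfl⟩
          have hε : (if b then (1 : ZMod m) else -1) = 1
              ∨ (if b then (1 : ZMod m) else -1) = -1 := by
            cases b
            · right; rfl
            · left; rfl
          exact ⟨⟨rot_isKrCycle hm hH₀.1 a _ hε, rot_spanning hH₀.1 hH₀.2 a _ hε⟩,
            rot_unionGraph a _ hε⟩
      rw [hset, Set.ncard_image_of_injective _ hinj, Set.ncard_univ,
        Nat.card_eq_fintype_card, Fintype.card_prod, ZMod.card, Fintype.card_bool, mul_comm]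
    exact count_fibers _ F (2 * m) hfibers
  have hfac : (k + 3 - 2).factorial = (k + 1).factorial := rfl
  rw [hfac, ← mul_assoc, stage1, stage2]

end
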